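/- Let f : [a,b] → ℝ with f^{(n−1)} absolutely continuous and f^{(n)} ∈ L^∞[a,b]. Then for every x ∈ [a,b], |∫_a^b f(t) dt − Σ_{k=0}^{n−1} [((b−x)^{k+1} + (−1)^k (x−a)^{k+1})/(k+1)!] f^{(k)}(x)| ≤ (1/(n+1)!) ‖f^{(n)}‖_∞ [(x−a)^{n+1} + (b−x)^{n+1}]. -/

import Mathlib

open MeasureTheory Set

private lemma taylor_aux_deriv (a b : ℝ) (n : ℕ) (fd : ℕ → ℝ → ℝ)
    (hderiv : ∀ k < n, ∀ x ∈ Icc a b, HasDerivAt (fd k) (fd (k + 1) x) x)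
    (c t : ℝ) (ht : t ∈ Icc a b) :
    HasDerivAt (fun t => ∑ k ∈ Finset.range n,
        ((-1 : ℝ) ^ k * (t - c) ^ (k + 1) / (Nat.factorial (k + 1))) * fd k t)
      (fd 0 t - (-1 : ℝ) ^ n * (t - c) ^ n / (Nat.factorial n) * fd n t) t := by
  set A : ℕ → ℝ := fun k => (-1 : ℝ) ^ k * (t - c) ^ k / (Nat.factorial k) * fd k t with hA
  have key : ∀ k ∈ Finset.range n,
      HasDerivAt (fun t => ((-1 : ℝ) ^ k * (t - c) ^ (k + 1) / (Nat.factorial (k + 1))) * fd k t)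
        (A k - A (k + 1)) t := by
    intro k hk
    rw [Finset.mem_range] at hk
    have hpoly : HasDerivAt (fun t => (-1 : ℝ) ^ k * (t - c) ^ (k + 1) / (Nat.factorial (k + 1)))
        ((-1 : ℝ) ^ k * ((k + 1 : ℕ) * (t - c) ^ k * 1) / (Nat.factorial (k + 1))) t :=
      (((hasDerivAt_id t).sub_const c).pow (k + 1)).const_mul _ |>.div_const _
    have := hpoly.mul (hderiv k hk t ht)
    refine HasDerivAt.congr_deriv this ?_
    have h1 : ((Nat.factorial (k + 1)) : ℝ) = (k + 1) * Nat.factorial k := by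
      push_cast [Nat.factorial_succ]; ring
    have h2 : ((Nat.factorial k) : ℝ) ≠ 0 := Nat.cast_ne_zero.2 (Nat.factorial_ne_zero k)
    simp only [hA, pow_succ]
    rw [h1]
    field_simp
    push_cast
    ring
  have hsum := HasDerivAt.fun_sum key
  have htel : ∑ k ∈ Finset.range n, (A k - A (k + 1)) = A 0 - A n :=
    Finset.sum_range_sub' A n
  rw [htel] at hsum
  refine HasDerivAt.congr_deriv hsum ?_
  simp [hA]

theorem taylor_kernel_inequality
    (a b K : ℝ) (n : ℕ) (fd : ℕ → ℝ → ℝ) (hab : a < b) (hn : 1 ≤ n)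
    (hderiv : ∀ k < n, ∀ x ∈ Icc a b, HasDerivAt (fd k) (fd (k + 1) x) x)
    (hint : IntervalIntegrable (fd n) volume a b)
    (hK : ∀ᵐ t ∂volume, t ∈ Icc a b → |fd n t| ≤ K) :
    ∀ x ∈ Icc a b,
      |(∫ t in a..b, fd 0 t) -
          ∑ k ∈ Finset.range n,
            (((b - x) ^ (k + 1) + (-1 : ℝ) ^ k * (x - a) ^ (k + 1)) /
              (Nat.factorial (k + 1))) * fd k x| ≤
        (1 / (Nat.factorial (n + 1))) * K * ((x - a) ^ (n + 1) + (b - x) ^ (n + 1)) := by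
  intro x hx
  obtain ⟨hax, hxb⟩ := hx
  have hab' : a ≤ b := hab.le
  -- continuity of fd 0 on Icc a b
  have hcont0 : ContinuousOn (fd 0) (Icc a b) := fun t ht =>
    ((hderiv 0 hn t ht).continuousAt).continuousWithinAt
  set g : ℝ → ℝ → ℝ := fun c t => ∑ k ∈ Finset.range n,
      ((-1 : ℝ) ^ k * (t - c) ^ (k + 1) / (Nat.factorial (k + 1))) * fd k t with hg
  set r : ℝ → ℝ → ℝ := fun c t => (-1 : ℝ) ^ n * (t - c) ^ n / (Nat.factorial n) * fd n t with hr
  -- integrability pieces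
  have hsub1 : uIcc a x ⊆ Icc a b := by
    rw [uIcc_of_le hax]; exact Icc_subset_Icc le_rfl hxb
  have hsub2 : uIcc x b ⊆ Icc a b := by
    rw [uIcc_of_le hxb]; exact Icc_subset_Icc hax le_rfl
  have hsub1' : uIcc a x ⊆ uIcc a b := by rw [uIcc_of_le hax, uIcc_of_le hab']; exact Icc_subset_Icc le_rfl hxb
  have hsub2' : uIcc x b ⊆ uIcc a b := by rw [uIcc_of_le hxb, uIcc_of_le hab']; exact Icc_subset_Icc hax le_rfl
  have hint0ax : IntervalIntegrable (fd 0) volume a x :=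
    (hcont0.mono hsub1).intervalIntegrable
  have hint0xb : IntervalIntegrable (fd 0) volume x b :=
    (hcont0.mono hsub2).intervalIntegrable
  have hintrax : IntervalIntegrable (r a) volume a x := by
    refine (hint.mono_set hsub1').continuousOn_mul ?_
    exact (continuous_const.mul ((continuous_id.sub continuous_const).pow n)).div_const _ |>.continuousOn
  have hintrxb : IntervalIntegrable (r b) volume x b := by
    refine (hint.mono_set hsub2').continuousOn_mul ?_
    exact (continuous_const.mul ((continuous_id.sub continuous_const).pow n)).div_const _ |>.continuousOn
  -- FTC on [a, x]
  have hA : ∫ t in a..x, (fd 0 t - r a t) = g a x - g a a := by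
    refine intervalIntegral.integral_eq_sub_of_hasDerivAt (fun t ht => ?_) (hint0ax.sub hintrax)
    exact taylor_aux_deriv a b n fd hderiv a t (hsub1 ht)
  have hB : ∫ t in x..b, (fd 0 t - r b t) = g b b - g b x := by
    refine intervalIntegral.integral_eq_sub_of_hasDerivAt (fun t ht => ?_) (hint0xb.sub hintrxb)
    exact taylor_aux_deriv a b n fd hderiv b t (hsub2 ht)
  have hgaa : g a a = 0 := by simp [hg]
  have hgbb : g b b = 0 := by simp [hg]
  rw [intervalIntegral.integral_sub hint0ax hintrax, hgaa, sub_zero] at hA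
  rw [intervalIntegral.integral_sub hint0xb hintrxb, hgbb, zero_sub] at hB
  have hsplit : (∫ t in a..b, fd 0 t) = (∫ t in a..x, fd 0 t) + ∫ t in x..b, fd 0 t :=
    (intervalIntegral.integral_add_adjacent_intervals hint0ax hint0xb).symm
  -- identify the sum
  have hsum_eq : g a x - g b x = ∑ k ∈ Finset.range n,
      (((b - x) ^ (k + 1) + (-1 : ℝ) ^ k * (x - a) ^ (k + 1)) /
        (Nat.factorial (k + 1))) * fd k x := by
    simp only [hg, ← Finset.sum_sub_distrib]
    refine Finset.sum_congr rfl fun k _ => ?_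
    have hbx : (b - x) ^ (k + 1) = (-1 : ℝ) ^ (k + 1) * (x - b) ^ (k + 1) := by
      rw [← neg_pow, neg_sub]
    rw [hbx]
    ring
  have hkey : (∫ t in a..b, fd 0 t) - (∑ k ∈ Finset.range n,
      (((b - x) ^ (k + 1) + (-1 : ℝ) ^ k * (x - a) ^ (k + 1)) /
        (Nat.factorial (k + 1))) * fd k x) = (∫ t in a..x, r a t) + ∫ t in x..b, r b t := by
    rw [hsplit, ← hsum_eq]
    have h1 : (∫ t in a..x, fd 0 t) = g a x + ∫ t in a..x, r a t := by linarith [hA]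
    have h2 : (∫ t in x..b, fd 0 t) = -(g b x) + ∫ t in x..b, r b t := by linarith [hB]
    rw [h1, h2]; ring
  rw [hkey]
  -- now bound
  have hfact : (0 : ℝ) < Nat.factorial n := by exact_mod_cast Nat.factorial_pos n
  have hbound1 : |∫ t in a..x, r a t| ≤ K * (x - a) ^ (n + 1) / ((n + 1) * Nat.factorial n) := by
    calc |∫ t in a..x, r a t| ≤ ∫ t in a..x, |r a t| :=
          intervalIntegral.abs_integral_le_integral_abs hax
      _ ≤ ∫ t in a..x, (t - a) ^ n / (Nat.factorial n) * K := by
          refine intervalIntegral.integral_mono_ae_restrict hax hintrax.abs ?_ ?_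
          · exact ((continuous_id.sub continuous_const).pow n).div_const _ |>.mul
              continuous_const |>.intervalIntegrable _ _
          · have h1 : ∀ᵐ t ∂(volume.restrict (Icc a x)), t ∈ Icc a b → |fd n t| ≤ K :=
              ae_restrict_of_ae hK
            have h2 : ∀ᵐ t ∂(volume.restrict (Icc a x)), t ∈ Icc a x :=
              ae_restrict_mem measurableSet_Icc
            filter_upwards [h1, h2] with t h1 h2
            have htab : t ∈ Icc a b := ⟨h2.1, h2.2.trans hxb⟩
            have hfn := h1 htab
            have hta : 0 ≤ t - a := by linarith [h2.1]
            have : |r a t| = (t - a) ^ n / (Nat.factorial n) * |fd n t| := by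
              rw [hr]
              rw [abs_mul, abs_div, abs_mul, abs_pow, abs_pow, abs_neg, abs_one, one_pow,
                one_mul, abs_of_nonneg hta, Nat.abs_cast]
            rw [this]
            have hpos : 0 ≤ (t - a) ^ n / (Nat.factorial n) := by positivity
            exact mul_le_mul_of_nonneg_left hfn hpos
      _ = K * (x - a) ^ (n + 1) / ((n + 1) * Nat.factorial n) := by
          rw [intervalIntegral.integral_mul_const, intervalIntegral.integral_div]
          have : (∫ t in a..x, (t - a) ^ n) = (x - a) ^ (n + 1) / (n + 1) := by
            rw [intervalIntegral.integral_comp_sub_right (fun u => u ^ n) a]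
            simp [integral_pow]
          rw [this]
          field_simp
  have hbound2 : |∫ t in x..b, r b t| ≤ K * (b - x) ^ (n + 1) / ((n + 1) * Nat.factorial n) := by
    calc |∫ t in x..b, r b t| ≤ ∫ t in x..b, |r b t| :=
          intervalIntegral.abs_integral_le_integral_abs hxb
      _ ≤ ∫ t in x..b, (b - t) ^ n / (Nat.factorial n) * K := by
          refine intervalIntegral.integral_mono_ae_restrict hxb hintrxb.abs ?_ ?_
          · exact ((continuous_const.sub continuous_id).pow n).div_const _ |>.mul
              continuous_const |>.intervalIntegrable _ _
          · have h1 : ∀ᵐ t ∂(volume.restrict (Icc x b)), t ∈ Icc a b → |fd n t| ≤ K :=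
              ae_restrict_of_ae hK
            have h2 : ∀ᵐ t ∂(volume.restrict (Icc x b)), t ∈ Icc x b :=
              ae_restrict_mem measurableSet_Icc
            filter_upwards [h1, h2] with t h1 h2
            have htab : t ∈ Icc a b := ⟨hax.trans h2.1, h2.2⟩
            have hfn := h1 htab
            have htb : 0 ≤ b - t := by linarith [h2.2]
            have habs : |t - b| = b - t := by rw [abs_sub_comm]; exact abs_of_nonneg htb
            have : |r b t| = (b - t) ^ n / (Nat.factorial n) * |fd n t| := by
              rw [hr]
              rw [abs_mul, abs_div, abs_mul, abs_pow, abs_pow, abs_neg, abs_one, one_pow,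
                one_mul, habs, Nat.abs_cast]
            rw [this]
            have hpos : 0 ≤ (b - t) ^ n / (Nat.factorial n) := by positivity
            exact mul_le_mul_of_nonneg_left hfn hpos
      _ = K * (b - x) ^ (n + 1) / ((n + 1) * Nat.factorial n) := by
          rw [intervalIntegral.integral_mul_const, intervalIntegral.integral_div]
          have : (∫ t in x..b, (b - t) ^ n) = (b - x) ^ (n + 1) / (n + 1) := by
            rw [intervalIntegral.integral_comp_sub_left (fun u => u ^ n) b]
            simp [integral_pow]
          rw [this]
          field_simp
  have hfactsucc : ((Nat.factorial (n + 1)) : ℝ) = (n + 1) * Nat.factorial n := by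
    push_cast [Nat.factorial_succ]; ring
  calc |(∫ t in a..x, r a t) + ∫ t in x..b, r b t|
      ≤ |∫ t in a..x, r a t| + |∫ t in x..b, r b t| := abs_add_le _ _
    _ ≤ K * (x - a) ^ (n + 1) / ((n + 1) * Nat.factorial n) +
        K * (b - x) ^ (n + 1) / ((n + 1) * Nat.factorial n) := add_le_add hbound1 hbound2
    _ = (1 / (Nat.factorial (n + 1))) * K * ((x - a) ^ (n + 1) + (b - x) ^ (n + 1)) := by
        rw [hfactsucc]
        have hne : ((n : ℝ) + 1) * Nat.factorial n ≠ 0 := by positivity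
        field_simp
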